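/- If U is a real Banach space of universal disposition for separable spaces, then every real Banach space X admitting a dense subset of cardinality at most ℵ₁ embeds isometrically into U; that is, there exists a linear isometric embedding X → U. -/

import Mathlib

/-!
Index a dense subset `D` of `X` by an initial part of `ω₁`, so that every element of `D` has
only countably many predecessors. By Zorn's lemma there is a maximal isometric embedding into `U`
defined on the span of a lower set of `D`. If its domain missed some `d ∈ D`, the domain would lie
in the span of the predecessors of `d`, a separable space; extending to its closure and then, by
universal disposition, to the closed span of `d` and its predecessors contradicts maximality. So
the maximal embedding is defined on the dense span of `D` and extends to `X` by continuity.
-/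

open Cardinal

/-- A real Banach space `U` is of universal disposition for separable spaces if for every
pair of separable real Banach spaces `A` and `B`, every linear isometric embedding
`u : A → U` and every linear isometric embedding `j : A → B`, there is a linear isometric
embedding `u' : B → U` with `u' ∘ j = u`. -/
def UnivDispSeparable (U : Type*) [NormedAddCommGroup U] [NormedSpace ℝ U] : Prop :=
  ∀ (A B : Type) [NormedAddCommGroup A] [NormedSpace ℝ A] [CompleteSpace A]
    [TopologicalSpace.SeparableSpace A]
    [NormedAddCommGroup B] [NormedSpace ℝ B] [CompleteSpace B]
    [TopologicalSpace.SeparableSpace B]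
    (u : A →ₗᵢ[ℝ] U) (j : A →ₗᵢ[ℝ] B),
    ∃ u' : B →ₗᵢ[ℝ] U, ∀ a : A, u' (j a) = u a

open TopologicalSpace

universe w

theorem small_of_separableSpace (E : Type*) [MetricSpace E] [SeparableSpace E] : Small.{w} E := by
  obtain ⟨S, hSc, hS⟩ := exists_countable_dense E
  have := hSc.to_subtype
  refine small_of_injective (f := fun x (s : S) => dist x s) fun x y hxy => ?_
  have : ∀ z, dist x z = dist y z := fun z =>
    hS.denseRange_val.induction_on z (isClosed_eq (continuous_const.dist continuous_id)
      (continuous_const.dist continuous_id)) (congrFun hxy)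
  simpa [eq_comm] using this x

theorem countable_Iio_toType_ord_aleph_one (i : (Cardinal.aleph 1).ord.ToType) :
    (Set.Iio i).Countable := by
  have := mk_Iio_lt i (by rw [mk_toType, card_ord, Ordinal.type_toType])
  rwa [mk_toType, card_ord, lt_aleph_one_iff, le_aleph0_iff_set_countable] at this

noncomputable def Shrink.linearIsometryEquiv (𝕜 E : Type*) [NormedField 𝕜]
    [SeminormedAddCommGroup E] [NormedSpace 𝕜 E] [Small.{w} E] : Shrink.{w} E ≃ₗᵢ[𝕜] E :=
  ⟨Shrink.linearEquiv 𝕜 E, fun _ => rfl⟩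

section

variable {R E : Type*} [Ring R] [SeminormedAddCommGroup E] [Module R E]

def Submodule.inclusionₗᵢ {p q : Submodule R E} (h : p ≤ q) : p →ₗᵢ[R] q :=
  ⟨Submodule.inclusion h, fun _ => rfl⟩

theorem Submodule.denseRange_inclusionₗᵢ {p q : Submodule R E} (h : p ≤ q)
    (hq : (q : Set E) ⊆ closure p) : DenseRange (Submodule.inclusionₗᵢ h) :=
  (denseRange_inclusion_iff h).2 hq

end

section

variable {𝕜 E F G : Type*} [NontriviallyNormedField 𝕜]
  [NormedAddCommGroup E] [NormedSpace 𝕜 E] [NormedAddCommGroup F] [NormedSpace 𝕜 F]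
  [NormedAddCommGroup G] [NormedSpace 𝕜 G] [CompleteSpace G]

theorem LinearIsometry.exists_extension_of_denseRange (i : E →ₗᵢ[𝕜] F) (hi : DenseRange i)
    (f : E →ₗᵢ[𝕜] G) : ∃ g : F →ₗᵢ[𝕜] G, ∀ x, g (i x) = f x := by
  have hui : IsUniformInducing i := i.isometry.isUniformInducing
  set g := f.toContinuousLinearMap.extend i.toContinuousLinearMap
  have hg : ∀ x, g (i x) = f x := ContinuousLinearMap.extend_eq _ hi hui
  refine ⟨⟨g.toLinearMap, fun y => ?_⟩, hg⟩
  refine hi.induction_on y (isClosed_eq g.continuous.norm continuous_norm) fun x => ?_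
  simp [hg]

end

section

variable {U : Type*} [NormedAddCommGroup U] [NormedSpace ℝ U]

theorem UnivDispSeparable.exists_extension (hU : UnivDispSeparable U) {A B : Type*}
    [NormedAddCommGroup A] [NormedSpace ℝ A] [CompleteSpace A] [SeparableSpace A]
    [NormedAddCommGroup B] [NormedSpace ℝ B] [CompleteSpace B] [SeparableSpace B]
    (u : A →ₗᵢ[ℝ] U) (j : A →ₗᵢ[ℝ] B) : ∃ u' : B →ₗᵢ[ℝ] U, ∀ a, u' (j a) = u a := by
  have := small_of_separableSpace.{0} A
  have := small_of_separableSpace.{0} B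
  let eA := Shrink.linearIsometryEquiv.{0} ℝ A
  let eB := Shrink.linearIsometryEquiv.{0} ℝ B
  have := eA.toIsometryEquiv.completeSpace_iff.2 ‹_›
  have := eB.toIsometryEquiv.completeSpace_iff.2 ‹_›
  have := eA.symm.surjective.denseRange.separableSpace eA.symm.continuous
  have := eB.symm.surjective.denseRange.separableSpace eB.symm.continuous
  obtain ⟨u', hu'⟩ := hU _ _ (u.comp eA.toLinearIsometry)
    (eB.symm.toLinearIsometry.comp (j.comp eA.toLinearIsometry))
  refine ⟨u'.comp eB.symm.toLinearIsometry, fun a => ?_⟩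
  simpa using hu' (eA.symm a)

variable {X : Type*} [NormedAddCommGroup X] [NormedSpace ℝ X]

theorem UnivDispSeparable.exists_extension_of_le [CompleteSpace X] [CompleteSpace U]
    (hU : UnivDispSeparable U) {M N : Submodule ℝ X} (hMN : M ≤ N)
    (hN : IsSeparable (N : Set X)) (f : M →ₗᵢ[ℝ] U) :
    ∃ g : N →ₗᵢ[ℝ] U, ∀ x : M, g (Submodule.inclusion hMN x) = f x := by
  set A := M.topologicalClosure
  set B := N.topologicalClosure
  have hAB : A ≤ B := Submodule.topologicalClosure_mono hMN
  have : CompleteSpace A := M.isClosed_topologicalClosure.completeSpace_coe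
  have : CompleteSpace B := N.isClosed_topologicalClosure.completeSpace_coe
  have hB : IsSeparable (B : Set X) := by
    rw [Submodule.topologicalClosure_coe]
    exact hN.closure
  have := hB.separableSpace
  have := (hB.mono hAB).separableSpace
  obtain ⟨fA, hfA⟩ := (Submodule.inclusionₗᵢ M.le_topologicalClosure).exists_extension_of_denseRange
    (Submodule.denseRange_inclusionₗᵢ _ M.topologicalClosure_coe.subset) f
  obtain ⟨g, hg⟩ := hU.exists_extension fA (Submodule.inclusionₗᵢ hAB)
  exact ⟨g.comp (Submodule.inclusionₗᵢ N.le_topologicalClosure), fun x => (hg _).trans (hfA x)⟩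

variable {I : Type*} (e : I → X)

variable (U) in
def lowerSpanIsometries [LE I] : Set (X →ₗ.[ℝ] U) :=
  {f | (∃ s, IsLowerSet s ∧ f.domain = Submodule.span ℝ (e '' s)) ∧ ∀ x, ‖f x‖ = ‖x‖}

theorem exists_lowerSpanIsometries_upperBound [LE I] {c : Set (X →ₗ.[ℝ] U)}
    (hcP : c ⊆ lowerSpanIsometries U e) (hc : IsChain (· ≤ ·) c) :
    ∃ g ∈ lowerSpanIsometries U e, ∀ f ∈ c, f ≤ g := by
  set g := LinearPMap.sSup c hc.directedOn
  refine ⟨g, ⟨?_, fun x => ?_⟩, fun f hf => LinearPMap.le_sSup _ hf⟩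
  · refine ⟨⋃₀ {s | IsLowerSet s ∧ Submodule.span ℝ (e '' s) ≤ g.domain},
      isLowerSet_sUnion fun s hs => hs.1, le_antisymm ?_ ?_⟩
    · refine sSup_le ?_
      rintro _ ⟨f, hf, rfl⟩
      obtain ⟨⟨s, hs, hfs⟩, -⟩ := hcP hf
      rw [hfs]
      refine Submodule.span_mono (Set.image_mono (Set.subset_sUnion_of_mem ⟨hs, ?_⟩))
      exact hfs ▸ (LinearPMap.le_sSup hc.directedOn hf).1
    · rw [Submodule.span_le]
      rintro _ ⟨i, ⟨s, ⟨-, hsg⟩, hi⟩, rfl⟩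
      exact hsg (Submodule.subset_span ⟨i, hi, rfl⟩)
  · rcases c.eq_empty_or_nonempty with rfl | hne
    · have hx : (x : X) = 0 := by simpa [g, LinearPMap.domain_sSup] using x.2
      have : x = 0 := Subtype.ext hx
      simp [this]
    obtain ⟨f, hf, hx⟩ := (LinearPMap.mem_domain_sSup_iff hne hc.directedOn).1 x.2
    rw [show g x = f ⟨x, hx⟩ from LinearPMap.sSup_apply hc.directedOn hf ⟨x, hx⟩]
    exact (hcP hf).2 _

theorem UnivDispSeparable.exists_lowerSpanIsometries_ge [CompleteSpace X] [CompleteSpace U]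
    (hU : UnivDispSeparable U) [LinearOrder I] (hI : ∀ i : I, (Set.Iio i).Countable)
    {f : X →ₗ.[ℝ] U} (hf : f ∈ lowerSpanIsometries U e)
    {i : I} (hi : e i ∉ f.domain) : ∃ g ∈ lowerSpanIsometries U e, f ≤ g ∧ e i ∈ g.domain := by
  obtain ⟨⟨s, hs, hfs⟩, hnorm⟩ := hf
  have hsi : s ⊆ Set.Iic i := fun j hj => le_of_not_ge fun hij =>
    hi (hfs ▸ Submodule.subset_span ⟨i, hs hij hj, rfl⟩)
  have hMN : f.domain ≤ Submodule.span ℝ (e '' Set.Iic i) :=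
    hfs ▸ Submodule.span_mono (Set.image_mono hsi)
  have hcount : (Set.Iic i).Countable := Set.Iio_insert (a := i) ▸ (hI i).insert i
  obtain ⟨g, hg⟩ := hU.exists_extension_of_le hMN (hcount.image e).isSeparable.span
    ⟨f.toFun, hnorm⟩
  refine ⟨⟨_, g.toLinearMap⟩, ⟨⟨Set.Iic i, isLowerSet_Iic i, rfl⟩, g.norm_map⟩,
    ⟨hMN, fun x y hxy => ?_⟩, Submodule.subset_span ⟨i, Set.self_mem_Iic, rfl⟩⟩
  obtain rfl : y = Submodule.inclusion hMN x := Subtype.ext hxy.symm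
  exact (hg x).symm

theorem UnivDispSeparable.nonempty_linearIsometry_of_dense_span [CompleteSpace X]
    [CompleteSpace U] (hU : UnivDispSeparable U) [LinearOrder I]
    (hI : ∀ i : I, (Set.Iio i).Countable)
    (he : Dense (Submodule.span ℝ (Set.range e) : Set X)) : Nonempty (X →ₗᵢ[ℝ] U) := by
  obtain ⟨m, hm⟩ := zorn_le₀ (lowerSpanIsometries U e) fun _ hcP hc =>
    exists_lowerSpanIsometries_upperBound e hcP hc
  have hrange : Set.range e ⊆ m.domain := by
    rintro _ ⟨i, rfl⟩
    by_contra hi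
    obtain ⟨g, hgP, hmg, hig⟩ := hU.exists_lowerSpanIsometries_ge e hI hm.prop hi
    exact hi ((hm.le_of_ge hgP hmg).1 hig)
  have hdense : DenseRange m.domain.subtypeₗᵢ := by
    simpa [DenseRange] using he.mono (Submodule.span_le.2 hrange)
  obtain ⟨g, -⟩ := m.domain.subtypeₗᵢ.exists_extension_of_denseRange hdense
    (⟨m.toFun, hm.prop.2⟩ : m.domain →ₗᵢ[ℝ] U)
  exact ⟨g⟩

end

/-- A space of universal disposition for separable spaces contains an isometric copy of
every Banach space with a dense subset of cardinality at most `ℵ₁`. -/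
theorem embeds_of_density_le_aleph_one (U : Type*)
    [NormedAddCommGroup U] [NormedSpace ℝ U] [CompleteSpace U]
    (hU : UnivDispSeparable U)
    (X : Type*) [NormedAddCommGroup X] [NormedSpace ℝ X] [CompleteSpace X]
    (hX : ∃ D : Set X, Dense D ∧ #D ≤ Cardinal.aleph 1) :
    Nonempty (X →ₗᵢ[ℝ] U) := by
  obtain ⟨D, hD, hcard⟩ := hX
  obtain ⟨g⟩ : Nonempty (D ↪ (Cardinal.aleph 1).ord.ToType) := by
    rwa [← Cardinal.le_def, mk_toType, card_ord]
  let : LinearOrder D := LinearOrder.lift' g g.injective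
  have hIio (d : D) : (Set.Iio d).Countable :=
    (countable_Iio_toType_ord_aleph_one (g d)).preimage g.injective
  refine hU.nonempty_linearIsometry_of_dense_span ((↑) : D → X) hIio ?_
  rw [Subtype.range_coe]
  exact hD.mono Submodule.subset_span
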